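/- arXiv:2206.14897 — 2 statements merged into one kernel-verified Lean document; each statement's English description precedes it below -/
import Mathlib

section
/- Let G be a connected finite simple graph on vertex set V = Fin M, and let c : V → V → ℝ be a symmetric weight function with c i j > 0 whenever i and j are adjacent. For any antisymmetric vector field u : V → V → ℝ supported on edges of G (i.e., u i j = -u j i and u i j = 0 unless i and j are adjacent), there exists a potential function Φ : V → ℝ such that the potential field ∇Φ (defined by (∇Φ) i j = (Φ i - Φ j) if i and j are adjacent and 0 otherwise) satisfies div_c(∇Φ) = div_c(u), and moreover ⟨∇Φ, ∇Φ⟩_c ≤ ⟨v, v⟩_c for every antisymmetric vector field v supported on edges of G with div_c(v) = div_c(u). That is, the minimizer of the energy ⟨v,v⟩_c over vector fields with prescribed divergence is attained by a potential field. -/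
/-- The potential field (gradient) of a potential function `Φ` on a graph `G`. -/
noncomputable def gradF {M : ℕ} (G : SimpleGraph (Fin M)) [DecidableRel G.Adj] (Φ : Fin M → ℝ) :
    Fin M → Fin M → ℝ :=
  fun i j => if G.Adj i j then Φ i - Φ j else 0

/-- The divergence of a vector field `v` with respect to the weights `c`. -/
noncomputable def divC {M : ℕ} (G : SimpleGraph (Fin M)) [DecidableRel G.Adj]
    (c : Fin M → Fin M → ℝ) (v : Fin M → Fin M → ℝ) : Fin M → ℝ :=
  fun i => ∑ j, if G.Adj i j then c i j * v i j else 0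

/-- The inner product of two vector fields with respect to the weights `c`. -/
noncomputable def innerC {M : ℕ} (G : SimpleGraph (Fin M)) [DecidableRel G.Adj]
    (c : Fin M → Fin M → ℝ) (u v : Fin M → Fin M → ℝ) : ℝ :=
  (1 / 2) * ∑ i, ∑ j, if G.Adj i j then c i j * u i j * v i j else 0

/-!
Summation by parts, `∑ i, Ψ i * div_c v i = ⟨∇Ψ, v⟩_c` for antisymmetric `v`, drives both halves.
For `v = ∇Φ` it shows that the weighted Laplacian `Φ ↦ div_c (∇Φ)` has only the constants in its
kernel when `G` is connected, so its range has codimension one; as every divergence has total sum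
zero, the range is exactly the hyperplane `∑ i, f i = 0`, which contains `div_c u`. For `v` with
`div_c v = div_c (∇Φ)` it shows that `v - ∇Φ` is orthogonal to `∇Φ`, so
`⟨v, v⟩_c = ⟨∇Φ, ∇Φ⟩_c + ⟨v - ∇Φ, v - ∇Φ⟩_c ≥ ⟨∇Φ, ∇Φ⟩_c`.
-/

open Finset

theorem SimpleGraph.Connected.eq_of_forall_adj {V α : Type*} {G : SimpleGraph V}
    (hG : G.Connected) {f : V → α} (hf : ∀ i j, G.Adj i j → f i = f j) (i j : V) :
    f i = f j := by
  obtain ⟨p⟩ := hG i j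
  induction p with
  | nil => rfl
  | cons hadj _ ih => exact (hf _ _ hadj).trans ih

section

variable {M : ℕ} (G : SimpleGraph (Fin M)) [DecidableRel G.Adj] (c : Fin M → Fin M → ℝ)

theorem gradF_antisymm (Φ : Fin M → ℝ) (i j : Fin M) : gradF G Φ i j = -gradF G Φ j i := by
  simp only [gradF, G.adj_comm j i]
  split_ifs <;> ring

noncomputable def gradFLinearMap : (Fin M → ℝ) →ₗ[ℝ] Fin M → Fin M → ℝ where
  toFun := gradF G
  map_add' Φ Ψ := by
    ext i j
    simp only [gradF, Pi.add_apply]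
    split_ifs <;> ring
  map_smul' r Φ := by
    ext i j
    simp only [gradF, Pi.smul_apply, smul_eq_mul, RingHom.id_apply]
    split_ifs <;> ring

noncomputable def divCLinearMap : (Fin M → Fin M → ℝ) →ₗ[ℝ] Fin M → ℝ where
  toFun := divC G c
  map_add' v w := by
    ext i
    simp only [divC, Pi.add_apply, ← sum_add_distrib]
    refine sum_congr rfl fun j _ => ?_
    split_ifs <;> ring
  map_smul' r v := by
    ext i
    simp only [divC, Pi.smul_apply, smul_eq_mul, RingHom.id_apply, mul_sum]
    refine sum_congr rfl fun j _ => ?_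
    split_ifs <;> ring

noncomputable def weightedLaplacian : (Fin M → ℝ) →ₗ[ℝ] Fin M → ℝ :=
  divCLinearMap G c ∘ₗ gradFLinearMap G

theorem weightedLaplacian_apply (Φ : Fin M → ℝ) :
    weightedLaplacian G c Φ = divC G c (gradF G Φ) :=
  rfl

variable {G c}

theorem sum_mul_divC (hsym : ∀ i j, c i j = c j i) (Ψ : Fin M → ℝ) {v : Fin M → Fin M → ℝ}
    (hv : ∀ i j, v i j = -v j i) :
    ∑ i, Ψ i * divC G c v i = innerC G c (gradF G Ψ) v := by
  set A : Fin M → Fin M → ℝ := fun i j => if G.Adj i j then Ψ i * (c i j * v i j) else 0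
  have hsplit : ∀ i j, (if G.Adj i j then c i j * gradF G Ψ i j * v i j else 0) = A i j + A j i := by
    intro i j
    simp only [A, gradF, G.adj_comm j i, hsym j i, hv j i]
    split_ifs <;> ring
  calc ∑ i, Ψ i * divC G c v i = ∑ i, ∑ j, A i j := by
        simp only [A, divC, mul_sum, mul_ite, mul_zero]
    _ = 1 / 2 * ∑ i, ∑ j, (A i j + A j i) := by
        simp only [sum_add_distrib]
        rw [sum_comm (f := fun i j => A j i)]
        ring
    _ = innerC G c (gradF G Ψ) v := by simp only [innerC, hsplit]

variable (G) in
theorem sum_divC_eq_zero (hsym : ∀ i j, c i j = c j i) {v : Fin M → Fin M → ℝ}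
    (hv : ∀ i j, v i j = -v j i) : ∑ i, divC G c v i = 0 := by
  simpa [gradF, innerC] using sum_mul_divC hsym (fun _ => 1) hv

theorem innerC_summand_nonneg (hpos : ∀ i j, G.Adj i j → 0 < c i j)
    (w : Fin M → Fin M → ℝ) (i j : Fin M) :
    0 ≤ if G.Adj i j then c i j * w i j * w i j else 0 := by
  split_ifs with hij
  · rw [mul_assoc]
    exact mul_nonneg (hpos i j hij).le (mul_self_nonneg _)
  · exact le_rfl

theorem innerC_self_nonneg (hpos : ∀ i j, G.Adj i j → 0 < c i j) (w : Fin M → Fin M → ℝ) :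
    0 ≤ innerC G c w w :=
  mul_nonneg (by norm_num) <| sum_nonneg fun i _ => sum_nonneg fun j _ =>
    innerC_summand_nonneg hpos w i j

theorem apply_eq_zero_of_innerC_self_eq_zero (hpos : ∀ i j, G.Adj i j → 0 < c i j)
    {w : Fin M → Fin M → ℝ} (hw : innerC G c w w = 0) {i j : Fin M} (hij : G.Adj i j) :
    w i j = 0 := by
  have hrow : ∀ i, 0 ≤ ∑ j, if G.Adj i j then c i j * w i j * w i j else 0 := fun i =>
    sum_nonneg fun j _ => innerC_summand_nonneg hpos w i j
  rw [innerC, mul_eq_zero, or_iff_right (by norm_num),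
    sum_eq_zero_iff_of_nonneg fun i _ => hrow i] at hw
  have hterm := (sum_eq_zero_iff_of_nonneg fun j _ => innerC_summand_nonneg hpos w i j).1
    (hw i (mem_univ i)) j (mem_univ j)
  rw [if_pos hij, mul_assoc, mul_eq_zero, or_iff_right (hpos i j hij).ne'] at hterm
  exact mul_self_eq_zero.1 hterm

theorem innerC_add_self (g w : Fin M → Fin M → ℝ) :
    innerC G c (g + w) (g + w) = innerC G c g g + 2 * innerC G c g w + innerC G c w w := by
  have hsummand : ∀ i j, (if G.Adj i j then c i j * (g + w) i j * (g + w) i j else 0) =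
      (if G.Adj i j then c i j * g i j * g i j else 0)
        + 2 * (if G.Adj i j then c i j * g i j * w i j else 0)
        + (if G.Adj i j then c i j * w i j * w i j else 0) := by
    intro i j
    simp only [Pi.add_apply]
    split_ifs <;> ring
  simp only [innerC, hsummand, sum_add_distrib, ← mul_sum]
  ring

theorem ker_weightedLaplacian_le_span_one (hconn : G.Connected) (hsym : ∀ i j, c i j = c j i)
    (hpos : ∀ i j, G.Adj i j → 0 < c i j) :
    LinearMap.ker (weightedLaplacian G c) ≤ Submodule.span ℝ {fun _ => 1} := by
  intro Φ hΦ
  rw [LinearMap.mem_ker, weightedLaplacian_apply] at hΦ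
  have henergy : innerC G c (gradF G Φ) (gradF G Φ) = 0 := by
    rw [← sum_mul_divC hsym Φ (gradF_antisymm G Φ), hΦ]
    simp
  have hadj : ∀ i j, G.Adj i j → Φ i = Φ j := fun i j hij => by
    have := apply_eq_zero_of_innerC_self_eq_zero hpos henergy hij
    rwa [gradF, if_pos hij, sub_eq_zero] at this
  obtain ⟨i₀⟩ := hconn.nonempty
  refine Submodule.mem_span_singleton.2 ⟨Φ i₀, funext fun i => ?_⟩
  simpa using hconn.eq_of_forall_adj hadj i₀ i

theorem exists_divC_gradF_eq (hconn : G.Connected) (hsym : ∀ i j, c i j = c j i)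
    (hpos : ∀ i j, G.Adj i j → 0 < c i j) {f : Fin M → ℝ} (hf : ∑ i, f i = 0) :
    ∃ Φ, divC G c (gradF G Φ) = f := by
  set L := weightedLaplacian G c
  set σ : (Fin M → ℝ) →ₗ[ℝ] ℝ := ∑ i, LinearMap.proj i
  have hσ : ∀ g, σ g = ∑ i, g i := fun g => by simp [σ]
  obtain ⟨i₀⟩ := hconn.nonempty
  have hσ_ne : σ ≠ 0 := fun h => by
    simpa [hσ] using LinearMap.congr_fun h (Pi.single i₀ 1)
  have hrange_le : LinearMap.range L ≤ LinearMap.ker σ := by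
    rintro _ ⟨Φ, rfl⟩
    rw [LinearMap.mem_ker, hσ, weightedLaplacian_apply]
    exact sum_divC_eq_zero G hsym (gradF_antisymm G Φ)
  have hker : Module.finrank ℝ (LinearMap.ker L) ≤ 1 :=
    (Submodule.finrank_mono (ker_weightedLaplacian_le_span_one hconn hsym hpos)).trans
      ((finrank_span_le_card _).trans (by simp))
  have hσ_dim := Module.Dual.finrank_ker_add_one_of_ne_zero hσ_ne
  have hL_dim := L.finrank_range_add_finrank_ker
  have hrange : LinearMap.range L = LinearMap.ker σ :=
    Submodule.eq_of_le_of_finrank_le hrange_le (by omega)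
  obtain ⟨Φ, hΦ⟩ : f ∈ LinearMap.range L := by
    rw [hrange, LinearMap.mem_ker, hσ, hf]
  exact ⟨Φ, hΦ⟩

theorem innerC_gradF_self_le (hsym : ∀ i j, c i j = c j i) (hpos : ∀ i j, G.Adj i j → 0 < c i j)
    (Φ : Fin M → ℝ) {v : Fin M → Fin M → ℝ} (hv : ∀ i j, v i j = -v j i)
    (hdiv : divC G c v = divC G c (gradF G Φ)) :
    innerC G c (gradF G Φ) (gradF G Φ) ≤ innerC G c v v := by
  set w := v - gradF G Φ
  have hw : ∀ i j, w i j = -w j i := fun i j => by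
    simp only [w, Pi.sub_apply, hv i j, gradF_antisymm G Φ i j]
    ring
  have hdiv_w : divC G c w = 0 := by
    change divCLinearMap G c (v - gradF G Φ) = 0
    rw [map_sub, sub_eq_zero]
    exact hdiv
  have horth : innerC G c (gradF G Φ) w = 0 := by
    rw [← sum_mul_divC hsym Φ hw, hdiv_w]
    simp
  have hv_eq : v = gradF G Φ + w := by simp [w]
  rw [hv_eq, innerC_add_self, horth]
  linarith [innerC_self_nonneg hpos w]

end

theorem minimizer_is_potential_field_general {M : ℕ} (G : SimpleGraph (Fin M))
    [DecidableRel G.Adj] (hconn : G.Connected)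
    (c : Fin M → Fin M → ℝ) (hsym : ∀ i j, c i j = c j i)
    (hpos : ∀ i j, G.Adj i j → 0 < c i j)
    (u : Fin M → Fin M → ℝ)
    (hanti : ∀ i j, u i j = -u j i) :
    ∃ Φ : Fin M → ℝ,
      divC G c (gradF G Φ) = divC G c u ∧
      ∀ v : Fin M → Fin M → ℝ,
        (∀ i j, v i j = -v j i) →
        (∀ i j, ¬ G.Adj i j → v i j = 0) →
        divC G c v = divC G c u →
        innerC G c (gradF G Φ) (gradF G Φ) ≤ innerC G c v v := by
  obtain ⟨Φ, hΦ⟩ := exists_divC_gradF_eq hconn hsym hpos (sum_divC_eq_zero G hsym hanti)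
  refine ⟨Φ, hΦ, fun v hv _ hdiv => ?_⟩
  exact innerC_gradF_self_le hsym hpos Φ hv (hdiv.trans hΦ.symm)

/-- The minimizer of the energy `⟨v, v⟩_c` over antisymmetric vector fields supported on
edges with prescribed divergence `div_c(u)` is attained by a potential field `∇Φ`. -/
theorem minimizer_is_potential_field {M : ℕ} (G : SimpleGraph (Fin M))
    [DecidableRel G.Adj] (hconn : G.Connected)
    (c : Fin M → Fin M → ℝ) (hsym : ∀ i j, c i j = c j i)
    (hpos : ∀ i j, G.Adj i j → 0 < c i j)
    (u : Fin M → Fin M → ℝ)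
    (hanti : ∀ i j, u i j = -u j i)
    (hsupp : ∀ i j, ¬ G.Adj i j → u i j = 0) :
    ∃ Φ : Fin M → ℝ,
      divC G c (gradF G Φ) = divC G c u ∧
      ∀ v : Fin M → Fin M → ℝ,
        (∀ i j, v i j = -v j i) →
        (∀ i j, ¬ G.Adj i j → v i j = 0) →
        divC G c v = divC G c u →
        innerC G c (gradF G Φ) (gradF G Φ) ≤ innerC G c v v :=
  minimizer_is_potential_field_general G hconn c hsym hpos u hanti
end

section
/- Let G be a connected finite simple graph on vertex set V = Fin M, and let c : V → V → ℝ be a symmetric weight function with c i j > 0 whenever i and j are adjacent. If Φ : V → ℝ satisfies ∑_{(i,j) : i adjacent to j} c i j * (Φ i - Φ j)² = 0, then Φ is constant on V, and hence div_c(∇Φ) = 0. Consequently, the induced bilinear form ⟨σ, σ⟩_ρ = ∑_i σ i * Φ^{σ} i on the tangent space T = {σ : V → ℝ | ∑_i σ i = 0} is positive definite: ⟨σ, σ⟩_ρ = 0 implies σ = 0. -/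
/-!
The energy of `Φ` is `2 ∑ i, Φ i * div_c(∇Φ) i` (summation by parts, using the symmetry of `c`),
and it is a sum of nonnegative terms `c i j * (Φ i - Φ j) ^ 2`. So zero energy forces `Φ` to agree
along every edge, hence to be constant on the connected graph, and then `∇Φ = 0`. For `σ` in the
tangent space with potential `Φ^σ`, `⟨σ, σ⟩_ρ` is half the energy of `Φ^σ`; if it vanishes, then
`σ = div_c(∇Φ^σ) = 0`.
-/

theorem SimpleGraph.Reachable.apply_eq_of_forall_adj {V α : Type*} {G : SimpleGraph V}
    {f : V → α} (hf : ∀ i j, G.Adj i j → f i = f j) {u v : V} (huv : G.Reachable u v) :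
    f u = f v := by
  obtain ⟨w⟩ := huv
  induction w with
  | nil => rfl
  | cons hadj _ ih => exact (hf _ _ hadj).trans ih

section Energy

variable {V : Type*} [Fintype V] (G : SimpleGraph V) [DecidableRel G.Adj] (c : V → V → ℝ)

noncomputable def dirichletEnergy (Φ : V → ℝ) : ℝ :=
  ∑ i, ∑ j, if G.Adj i j then c i j * (Φ i - Φ j) ^ 2 else 0

theorem eq_of_adj_of_dirichletEnergy_eq_zero (hpos : ∀ i j, G.Adj i j → 0 < c i j)
    {Φ : V → ℝ} (hE : dirichletEnergy G c Φ = 0) {i j : V} (hij : G.Adj i j) : Φ i = Φ j := by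
  have hterm_nonneg : ∀ i j, 0 ≤ if G.Adj i j then c i j * (Φ i - Φ j) ^ 2 else 0 := by
    intro i j
    split_ifs with h
    · exact mul_nonneg (hpos i j h).le (sq_nonneg _)
    · exact le_rfl
  have hrow := (Finset.sum_eq_zero_iff_of_nonneg fun i _ =>
    Finset.sum_nonneg fun j _ => hterm_nonneg i j).mp hE i (Finset.mem_univ i)
  have hterm := (Finset.sum_eq_zero_iff_of_nonneg fun j _ => hterm_nonneg i j).mp hrow j
    (Finset.mem_univ j)
  rw [if_pos hij, mul_eq_zero, or_iff_right (hpos i j hij).ne', sq_eq_zero_iff,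
    sub_eq_zero] at hterm
  exact hterm

end Energy

section Fin

variable {M : ℕ} (G : SimpleGraph (Fin M)) [DecidableRel G.Adj] (c : Fin M → Fin M → ℝ)

theorem gradF_eq_zero {Φ : Fin M → ℝ} (hΦ : ∀ i j, G.Adj i j → Φ i = Φ j) : gradF G Φ = 0 := by
  funext i j
  simp only [gradF, Pi.zero_apply, ite_eq_right_iff]
  exact fun hij => sub_eq_zero.mpr (hΦ i j hij)

theorem divC_zero : divC G c 0 = 0 := by
  funext i
  simp [divC]

theorem dirichletEnergy_eq_two_mul_sum_mul_divC_gradF (hsym : ∀ i j, c i j = c j i)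
    (Φ : Fin M → ℝ) :
    dirichletEnergy G c Φ = 2 * ∑ i, Φ i * divC G c (gradF G Φ) i := by
  let flux : Fin M → Fin M → ℝ := fun i j => if G.Adj i j then Φ i * (c i j * (Φ i - Φ j)) else 0
  have hsplit : ∀ i j, (if G.Adj i j then c i j * (Φ i - Φ j) ^ 2 else 0) = flux i j + flux j i := by
    intro i j
    by_cases hij : G.Adj i j
    · simp only [flux, if_pos hij, if_pos hij.symm, hsym j i]
      ring
    · simp only [flux, if_neg hij, if_neg (mt G.adj_symm hij), add_zero]
  have hflux : ∀ i, Φ i * divC G c (gradF G Φ) i = ∑ j, flux i j := by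
    intro i
    rw [divC, Finset.mul_sum]
    refine Finset.sum_congr rfl fun j _ => ?_
    by_cases hij : G.Adj i j <;> simp [flux, gradF, hij]
  calc dirichletEnergy G c Φ = ∑ i, ∑ j, flux i j + ∑ i, ∑ j, flux j i := by
        simp only [dirichletEnergy, hsplit, Finset.sum_add_distrib]
    _ = 2 * ∑ i, Φ i * divC G c (gradF G Φ) i := by
        rw [Finset.sum_comm (f := fun i j => flux j i), two_mul]
        simp only [hflux]

end Fin

/-- If the Dirichlet energy `∑_{(i,j) adjacent} c i j * (Φ i - Φ j)²` vanishes on a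
connected graph with positive symmetric weights, then `Φ` is constant and
`div_c(∇Φ) = 0`. Consequently the induced bilinear form `⟨σ, σ⟩_ρ = ∑ i, σ i * Φ^σ i` on
the tangent space is positive definite. -/
theorem energy_zero_positive_definite {M : ℕ} (G : SimpleGraph (Fin M))
    [DecidableRel G.Adj] (hconn : G.Connected)
    (c : Fin M → Fin M → ℝ) (hsym : ∀ i j, c i j = c j i)
    (hpos : ∀ i j, G.Adj i j → 0 < c i j) :
    (∀ Φ : Fin M → ℝ,
      (∑ i, ∑ j, if G.Adj i j then c i j * (Φ i - Φ j) ^ 2 else 0) = 0 →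
      (∀ i j, Φ i = Φ j) ∧ divC G c (gradF G Φ) = 0) ∧
    (∀ σ Φσ : Fin M → ℝ, (∑ i, σ i = 0) → divC G c (gradF G Φσ) = σ →
      ∑ i, σ i * Φσ i = 0 → σ = 0) := by
  have hdiv_zero : ∀ Φ, dirichletEnergy G c Φ = 0 → divC G c (gradF G Φ) = 0 := fun Φ hE => by
    rw [gradF_eq_zero G fun i j => eq_of_adj_of_dirichletEnergy_eq_zero G c hpos hE, divC_zero]
  refine ⟨fun Φ hE => ⟨fun i j => ?_, hdiv_zero Φ hE⟩, fun σ Φσ _ hσ hinner => ?_⟩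
  · exact (hconn.preconnected i j).apply_eq_of_forall_adj fun i j =>
      eq_of_adj_of_dirichletEnergy_eq_zero G c hpos hE
  · have hE : dirichletEnergy G c Φσ = 0 := by
      simp_rw [dirichletEnergy_eq_two_mul_sum_mul_divC_gradF G c hsym, hσ, mul_comm (Φσ _),
        hinner, mul_zero]
    rw [← hσ, hdiv_zero Φσ hE]
end
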